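/- Every cubical iterated graph system is of bounded geometry. -/

import Mathlib

namespace IGSP

/-- An iterated graph system: a finite connected oriented graph `G₁ = (S, E)`, a set of
types `T` with a surjective typing map on edges, and nonempty gluing rules `I_t ⊆ S × S`. -/
structure System (S T : Type) where
  E : S → S → Prop
  not_both : ∀ x y : S, E x y → ¬ E y x
  irrefl : ∀ x : S, ¬ E x x
  conn : ∀ x y : S, Relation.ReflTransGen (fun a b => E a b ∨ E b a) x y
  typ : S → S → T
  typ_surj : ∀ t : T, ∃ x y, E x y ∧ typ x y = t
  glue : T → S → S → Prop
  glue_nonempty : ∀ t : T, ∃ x y, glue t x y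

variable {S T : Type}

/-- Words of length `m` over the symbol set `S`. -/
abbrev Word (S : Type) (m : ℕ) := Fin m → S

open Classical in
/-- The replacement graphs together with their typing functions, defined by recursion on
the length of words: `G₁ = (S,E)` and an oriented edge `(w,v) ∈ E_{m+1}` holds iff either
the length-`m` prefixes agree and the last symbols form an edge of `G₁`, or the prefixes
form an edge of `E_m` and the last symbols belong to the gluing rule of its type. -/
noncomputable def replData [Nonempty T] (F : System S T) :
    (L : ℕ) → (Word S L → Word S L → Prop) × (Word S L → Word S L → T)
  | 0 => ⟨fun _ _ => False, fun _ _ => Classical.arbitrary T⟩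
  | 1 => ⟨fun w v => F.E (w 0) (v 0), fun w v => F.typ (w 0) (v 0)⟩
  | L + 2 =>
      ⟨fun w v =>
        (Fin.init w = Fin.init v ∧ F.E (w (Fin.last (L + 1))) (v (Fin.last (L + 1)))) ∨
        ((replData F (L + 1)).1 (Fin.init w) (Fin.init v) ∧
          F.glue ((replData F (L + 1)).2 (Fin.init w) (Fin.init v))
            (w (Fin.last (L + 1))) (v (Fin.last (L + 1)))),
       fun w v =>
        if Fin.init w = Fin.init v then F.typ (w (Fin.last (L + 1))) (v (Fin.last (L + 1)))
        else (replData F (L + 1)).2 (Fin.init w) (Fin.init v)⟩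

/-- The oriented edge relation of the replacement graph on words of length `L`. -/
def edge [Nonempty T] (F : System S T) (L : ℕ) (w v : Word S L) : Prop :=
  (replData F L).1 w v

/-- The typing function of the replacement graph on words of length `L`. -/
noncomputable def etyp [Nonempty T] (F : System S T) (L : ℕ) (w v : Word S L) : T :=
  (replData F L).2 w v

/-- The unoriented edge ("{w,v} ∈ E_L") relation. -/
def adjW [Nonempty T] (F : System S T) (L : ℕ) (w v : Word S L) : Prop :=
  edge F L w v ∨ edge F L v w

/-- The replacement graph `G_L` as a simple graph on words of length `L`. -/
noncomputable def replGraph [Nonempty T] (F : System S T) (L : ℕ) : SimpleGraph (Word S L) where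
  Adj w v := w ≠ v ∧ adjW F L w v
  symm := by
    constructor
    intro w v h
    exact ⟨Ne.symm h.1, Or.symm h.2⟩
  loopless := by
    constructor
    intro w h
    exact h.1 rfl

/-- The degree of a word `w` in the replacement graph `G_L`: the number of `v` with
`{w,v} ∈ E_L`. -/
noncomputable def degGm [Nonempty T] (F : System S T) (L : ℕ) (w : Word S L) : ℕ :=
  {v : Word S L | adjW F L w v}.ncard

/-- `I_{t,+}`, the set of symbols occurring as the first coordinate of the gluing rule. -/
def Iplus (F : System S T) (t : T) : Set S := {a | ∃ b, F.glue t a b}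

/-- `I_{t,-}`, the set of symbols occurring as the second coordinate of the gluing rule. -/
def Iminus (F : System S T) (t : T) : Set S := {b | ∃ a, F.glue t a b}

/-- `I_{t,★}` where the orientation `★` is encoded by a boolean: `true = +`, `false = -`. -/
def Iset (F : System S T) (t : T) : Bool → Set S
  | true => Iplus F t
  | false => Iminus F t

/-- `I_{t,★}^{(m)} = (I_{t,★})^m ⊆ W_m`. -/
def IsetW (F : System S T) (t : T) (b : Bool) (m : ℕ) : Set (Word S m) :=
  {w | ∀ i, w i ∈ Iset F t b}

/-- The boundary `∂G_m = ⋃_{(t,★)} I_{t,★}^{(m)}`. -/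
def boundaryW (F : System S T) (m : ℕ) : Set (Word S m) :=
  ⋃ (t : T) (b : Bool), IsetW F t b m

/-- (GR1): every symbol has at most one gluing partner for each type and orientation. -/
def GR1 (F : System S T) : Prop :=
  ∀ (t : T) (s : S), {b | F.glue t s b}.Subsingleton ∧ {a | F.glue t a s}.Subsingleton

/-- (GR2): for no type, orientation and symbol are the gluing-partner count and the
corresponding oriented degree in `G₁` simultaneously nonzero. -/
def GR2 (F : System S T) : Prop :=
  ∀ (t : T) (s : S),
    ¬ ((∃ b, F.glue t s b) ∧ ∃ b, F.E s b ∧ F.typ s b = t) ∧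
    ¬ ((∃ a, F.glue t a s) ∧ ∃ a, F.E a s ∧ F.typ a s = t)

/-- (GR3): `I_{t,-} ∩ I_{t,+} = ∅` for every type `t`. -/
def GR3 (F : System S T) : Prop := ∀ t : T, Iminus F t ∩ Iplus F t = ∅

/-- Assumption (GR). -/
def GR (F : System S T) : Prop := GR1 F ∧ GR2 F ∧ GR3 F

/-- A path in the replacement graph `G_L`: a nonempty list of words with consecutive
entries joined by an edge. -/
def IsPath [Nonempty T] (F : System S T) (L : ℕ) (θ : List (Word S L)) : Prop :=
  θ ≠ [] ∧ θ.Chain' (adjW F L)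

open Classical in
/-- The projection `π_{L,k}` of a path: take length-`k` prefixes and remove consecutive
repetitions. -/
noncomputable def proj {k L : ℕ} (h : k ≤ L) (θ : List (Word S L)) : List (Word S k) :=
  (θ.map fun w => fun i => w (Fin.castLE h i)).destutter (· ≠ ·)

/-- An intersection path in `G_{m+1}`: a path admitting a compatible sequence of paths at
all levels with uniformly bounded lengths. -/
def IsIntersectionPath [Nonempty T] (F : System S T) (m : ℕ) (θ : List (Word S (m + 1))) :
    Prop :=
  IsPath F (m + 1) θ ∧
  ∃ Θ : (n : ℕ) → List (Word S (n + 1)),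
    Θ m = θ ∧ (∀ n, IsPath F (n + 1) (Θ n)) ∧
    (∀ (k n : ℕ) (h : k ≤ n), proj (Nat.succ_le_succ h) (Θ n) = Θ k) ∧
    ∃ C : ℕ, ∀ n, (Θ n).length ≤ C

/-- The fundamental neighbourhood `𝒩(w)`. -/
def nbhd [Nonempty T] (F : System S T) (m : ℕ) (w : Word S (m + 1)) :
    Set (Word S (m + 1)) :=
  {v | ∃ θ, IsIntersectionPath F m θ ∧ θ.head? = some w ∧ θ.getLast? = some v}

/-- Bounded geometry: the diameters of fundamental neighbourhoods are uniformly bounded. -/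
def BoundedGeometry [Nonempty T] (F : System S T) : Prop :=
  ∃ D : ℕ, ∀ (m : ℕ) (w : Word S (m + 1)), ∀ v₁ ∈ nbhd F m w, ∀ v₂ ∈ nbhd F m w,
    (replGraph F (m + 1)).dist v₁ v₂ ≤ D

/-- `|w ∧ v| < L` for words of length `L`: the words differ at some index below the last. -/
def ncRel {L : ℕ} (w v : Word S L) : Prop := ∃ j : Fin L, (j : ℕ) + 1 < L ∧ w j ≠ v j

/-- A non-collapsing path: consecutive vertices satisfy `|w ∧ v| < L`. -/
def NonCollapsing {L : ℕ} (θ : List (Word S L)) : Prop := θ.Chain' ncRel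

/-- A mapping between iterated graph systems. -/
structure Hom {S T S' T' : Type} (F : System S T) (F' : System S' T') where
  toFun : S → S'
  map_edge : ∀ x y, (F.E x y ∨ F.E y x) →
    (toFun x = toFun y ∨ F'.E (toFun x) (toFun y) ∨ F'.E (toFun y) (toFun x))
  glue_collapse : ∀ w1 v1, F.E w1 v1 → toFun w1 = toFun v1 →
    ∀ w2 v2, F.glue (F.typ w1 v1) w2 v2 → toFun w2 = toFun v2
  glue_fwd : ∀ w1 v1, F.E w1 v1 → F'.E (toFun w1) (toFun v1) →
    ∀ w2 v2, F.glue (F.typ w1 v1) w2 v2 →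
      F'.glue (F'.typ (toFun w1) (toFun v1)) (toFun w2) (toFun v2)
  glue_rev : ∀ w1 v1, F.E w1 v1 → F'.E (toFun v1) (toFun w1) →
    ∀ w2 v2, F.glue (F.typ w1 v1) w2 v2 →
      F'.glue (F'.typ (toFun v1) (toFun w1)) (toFun v2) (toFun w2)

/-- An isomorphism between iterated graph systems: a pair of mutually inverse mappings. -/
structure Iso {S T S' T' : Type} (F : System S T) (F' : System S' T') where
  hom : Hom F F'
  inv : Hom F' F
  left_inv : ∀ x, inv.toFun (hom.toFun x) = x
  right_inv : ∀ y, hom.toFun (inv.toFun y) = y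

/-- A flipping symmetry of type `t`. -/
def IsFlip (F : System S T) (t : T) (η : Iso F F) : Prop :=
  (∀ w ∈ Iplus F t, F.glue t w (η.hom.toFun w)) ∧
  (∀ v ∈ Iminus F t, F.glue t (η.hom.toFun v) v)

/-- The data of a reflection symmetry of an iterated graph system: an involutive
isomorphism together with the partition `S = C ∪ D ∪ Δ` satisfying (D1)-(D4). -/
structure ReflData (F : System S T) where
  iso : Iso F F
  C : Set S
  D : Set S
  invol : ∀ x, iso.hom.toFun (iso.hom.toFun x) = x
  C_not_fixed : ∀ x ∈ C, iso.hom.toFun x ≠ x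
  D_not_fixed : ∀ x ∈ D, iso.hom.toFun x ≠ x
  CD_disjoint : ∀ x, ¬ (x ∈ C ∧ x ∈ D)
  cover : ∀ x, x ∈ C ∨ x ∈ D ∨ iso.hom.toFun x = x
  image_C : iso.hom.toFun '' C = D
  edge_CD : ∀ x ∈ C, ∀ y ∈ D, (F.E x y ∨ F.E y x) → iso.hom.toFun x = y
  D2 : ∀ w1 v1, F.E w1 v1 → iso.hom.toFun v1 = v1 →
    (w1 ∈ C → Iminus F (F.typ w1 v1) ⊆ C ∪ {x | iso.hom.toFun x = x}) ∧
    (w1 ∈ D → Iminus F (F.typ w1 v1) ⊆ D ∪ {x | iso.hom.toFun x = x})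
  D3 : ∀ w1 v1, F.E w1 v1 → iso.hom.toFun w1 = w1 →
    (v1 ∈ C → Iplus F (F.typ w1 v1) ⊆ C ∪ {x | iso.hom.toFun x = x}) ∧
    (v1 ∈ D → Iplus F (F.typ w1 v1) ⊆ D ∪ {x | iso.hom.toFun x = x})
  D4 : ∀ w1 v1, F.E w1 v1 → iso.hom.toFun w1 = w1 → iso.hom.toFun v1 = v1 →
    ∀ w2 v2, F.glue (F.typ w1 v1) w2 v2 →
      (w2 ∈ C ∧ v2 ∈ C) ∨ (w2 ∈ D ∧ v2 ∈ D) ∨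
      (iso.hom.toFun w2 = w2 ∧ iso.hom.toFun v2 = v2)

/-- (D5): a reflection symmetry. -/
def IsRefl {F : System S T} (R : ReflData F) : Prop :=
  ∀ w1 v1, F.E w1 v1 → w1 ∈ R.C → v1 ∈ R.D →
    ∀ w2 v2, F.glue (F.typ w1 v1) w2 v2 → R.iso.hom.toFun w2 = v2

/-- (D5*): a separative reflection symmetry. -/
def IsSepRefl {F : System S T} (R : ReflData F) : Prop :=
  ∀ x ∈ R.C, ∀ y ∈ R.D, ¬ (F.E x y ∨ F.E y x)

/-- The coordinatewise action of a reflection symmetry on words. -/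
def wordMap {F : System S T} (R : ReflData F) {m : ℕ} (w : Word S m) : Word S m :=
  fun i => R.iso.hom.toFun (w i)

/-- The lifted set `C_α^{(m)}`: words whose first non-fixed coordinate lies in `C`. -/
def liftC {F : System S T} (R : ReflData F) (m : ℕ) : Set (Word S m) :=
  {w | ∃ k : Fin m, w k ∈ R.C ∧ ∀ j < k, R.iso.hom.toFun (w j) = w j}

/-- The lifted set `D_α^{(m)}`: words whose first non-fixed coordinate lies in `D`. -/
def liftD {F : System S T} (R : ReflData F) (m : ℕ) : Set (Word S m) :=
  {w | ∃ k : Fin m, w k ∈ R.D ∧ ∀ j < k, R.iso.hom.toFun (w j) = w j}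

end IGSP
namespace IGSP

variable {S T : Type}

/-- An antisymmetric function supported on the edges of a graph. -/
def Antisym {V : Type} (G : SimpleGraph V) (Φ : V → V → ℝ) : Prop :=
  (∀ x y, Φ x y = - Φ y x) ∧ ∀ x y, ¬ G.Adj x y → Φ x y = 0

/-- The divergence of `Φ` at a vertex. -/
noncomputable def fdiv {V : Type} (Φ : V → V → ℝ) (x : V) : ℝ := ∑ᶠ y, Φ x y

/-- A flow from `A` to `B`. -/
def IsFlow {V : Type} (G : SimpleGraph V) (A B : Set V) (Φ : V → V → ℝ) : Prop :=
  Antisym G Φ ∧ ∀ x, x ∉ A ∪ B → fdiv Φ x = 0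

/-- The total flow `I(Φ) = Σ_{x ∈ A} div Φ (x)`. -/
noncomputable def totalFlow {V : Type} (A : Set V) (Φ : V → V → ℝ) : ℝ :=
  ∑ᶠ x ∈ A, fdiv Φ x

/-- The `q`-energy `E_q(Φ) = Σ_{{x,y} ∈ E} |Φ(x,y)|^q` (each unordered edge counted once). -/
noncomputable def energy {V : Type} (q : ℝ) (Φ : V → V → ℝ) : ℝ :=
  (∑ᶠ x, ∑ᶠ y, |Φ x y| ^ q) / 2

/-- The degree of a vertex of a graph. -/
noncomputable def degOf {V : Type} (G : SimpleGraph V) (x : V) : ℕ := {y | G.Adj x y}.ncard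

/-- The maximal degree of a finite graph. -/
noncomputable def maxDeg {V : Type} [Fintype V] (G : SimpleGraph V) : ℕ :=
  Finset.univ.sup fun x => degOf G x

/-- The diameter of a finite graph (in the shortest-path metric). -/
noncomputable def gdiam {V : Type} [Fintype V] (G : SimpleGraph V) : ℕ :=
  Finset.univ.sup fun pr : V × V => G.dist pr.1 pr.2

/-- The set of vertices of a path. -/
def pathVerts {V : Type} (θ : List V) : Set V := {x | x ∈ θ}

/-- A density is admissible for a path family if it is nonnegative and its sum along
every path of the family is at least 1. -/
def Admissible {V : Type} (Θ : Set (List V)) (ρ : V → ℝ) : Prop :=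
  (∀ x, 0 ≤ ρ x) ∧ ∀ θ ∈ Θ, 1 ≤ ∑ᶠ x ∈ pathVerts θ, ρ x

/-- The discrete (vertex) `p`-modulus of a family of paths. -/
noncomputable def modulus {V : Type} (p : ℝ) (Θ : Set (List V)) : ℝ :=
  sInf {M | ∃ ρ : V → ℝ, Admissible Θ ρ ∧ M = ∑ᶠ x, ρ x ^ p}

/-- The `p`-resistance `E_q(A,B,G)`: infimal `q`-energy of unit flows from `A` to `B`. -/
noncomputable def resistance {V : Type} (q : ℝ) (G : SimpleGraph V) (A B : Set V) : ℝ :=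
  sInf {e | ∃ Φ, IsFlow G A B Φ ∧ totalFlow A Φ = 1 ∧ e = energy q Φ}

/-- The family `Θ_𝔞^{(m)}` of paths in `G_m` from `I_{t₁,★₁}^{(m)}` to `I_{t₂,★₂}^{(m)}`. -/
def ThetaIGS [Nonempty T] (F : System S T) (m : ℕ) (t₁ : T) (b₁ : Bool) (t₂ : T)
    (b₂ : Bool) : Set (List (Word S m)) :=
  {θ | IsPath F m θ ∧ (∃ w ∈ IsetW F t₁ b₁ m, θ.head? = some w) ∧
    ∃ v ∈ IsetW F t₂ b₂ m, θ.getLast? = some v}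

/-- `ℒ^{(m)}`, the collection of sets `I_{t,★}^{(m)}`. -/
def scriptL [Nonempty T] (F : System S T) (m : ℕ) : Set (Set (Word S m)) :=
  {A | ∃ (t : T) (b : Bool), A = IsetW F t b m}

/-- The added vertices `v_L` (for `L ∈ ℒ^{(m)}` and `v ∈ L`) of the graph `G̃_m`. -/
def AddedV [Nonempty T] (F : System S T) (m : ℕ) :=
  {pr : Set (Word S m) × Word S m // pr.1 ∈ scriptL F m ∧ pr.2 ∈ pr.1}

/-- The vertex set of the graph `G̃_m`. -/
def TildeV [Nonempty T] (F : System S T) (m : ℕ) := Word S m ⊕ AddedV F m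

/-- The graph `G̃_m`, obtained from `G_m` by attaching a pendant vertex `v_L` at every
`v ∈ L` for every `L ∈ ℒ^{(m)}`. -/
noncomputable def tildeG [Nonempty T] (F : System S T) (m : ℕ) : SimpleGraph (TildeV F m) where
  Adj x y :=
    match x, y with
    | Sum.inl w, Sum.inl v => w ≠ v ∧ adjW F m w v
    | Sum.inl w, Sum.inr pr => pr.1.2 = w
    | Sum.inr pr, Sum.inl w => pr.1.2 = w
    | Sum.inr _, Sum.inr _ => False
  symm := by
    constructor
    rintro (w | pr) (v | qr) h
    · exact ⟨Ne.symm h.1, Or.symm h.2⟩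
    · exact h
    · exact h
    · exact h.elim
  loopless := by
    constructor
    rintro (w | pr) h
    · exact h.1 rfl
    · exact h

/-- The set `L̃ = {v_L : v ∈ L}` of added vertices over `L`. -/
def tildeSet [Nonempty T] (F : System S T) (m : ℕ) (L : Set (Word S m)) :
    Set (TildeV F m) :=
  {x | ∃ pr : AddedV F m, pr.1.1 = L ∧ x = Sum.inr pr}

/-- A flow basis on `G̃_m`: a family of unit flows between the added vertex sets of all
pairs of distinct members of `ℒ^{(m)}`, satisfying (FB1)–(FB4). -/
structure FlowBasis [Nonempty T] (F : System S T) (ηfam : T → Iso F F) (m : ℕ) where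
  flow : (L₁ L₂ : Set (Word S m)) → L₁ ∈ scriptL F m → L₂ ∈ scriptL F m → L₁ ≠ L₂ →
    TildeV F m → TildeV F m → ℝ
  flow_isFlow : ∀ (L₁ L₂ : Set (Word S m)) (h₁ : L₁ ∈ scriptL F m) (h₂ : L₂ ∈ scriptL F m)
    (hne : L₁ ≠ L₂),
    IsFlow (tildeG F m) (tildeSet F m L₁) (tildeSet F m L₂) (flow L₁ L₂ h₁ h₂ hne)
  flow_unit : ∀ (L₁ L₂ : Set (Word S m)) (h₁ : L₁ ∈ scriptL F m) (h₂ : L₂ ∈ scriptL F m)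
    (hne : L₁ ≠ L₂), totalFlow (tildeSet F m L₁) (flow L₁ L₂ h₁ h₂ hne) = 1
  fb2 : ∀ (L₁ L₂ : Set (Word S m)) (h₁ : L₁ ∈ scriptL F m) (h₂ : L₂ ∈ scriptL F m)
    (hne : L₁ ≠ L₂) (pr : AddedV F m), pr.1.1 ≠ L₁ → pr.1.1 ≠ L₂ →
    flow L₁ L₂ h₁ h₂ hne (Sum.inr pr) (Sum.inl pr.1.2) = 0
  fb3_out : ∀ (L L₁ L₂ : Set (Word S m)) (hL : L ∈ scriptL F m) (h₁ : L₁ ∈ scriptL F m)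
    (h₂ : L₂ ∈ scriptL F m) (hne₁ : L ≠ L₁) (hne₂ : L ≠ L₂) (pr : AddedV F m),
    pr.1.1 = L →
    flow L L₁ hL h₁ hne₁ (Sum.inr pr) (Sum.inl pr.1.2) =
      flow L L₂ hL h₂ hne₂ (Sum.inr pr) (Sum.inl pr.1.2)
  fb3_in : ∀ (L L₁ L₂ : Set (Word S m)) (hL : L ∈ scriptL F m) (h₁ : L₁ ∈ scriptL F m)
    (h₂ : L₂ ∈ scriptL F m) (hne₁ : L₁ ≠ L) (hne₂ : L₂ ≠ L) (pr : AddedV F m),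
    pr.1.1 = L →
    flow L₁ L h₁ hL hne₁ (Sum.inl pr.1.2) (Sum.inr pr) =
      flow L₂ L h₂ hL hne₂ (Sum.inl pr.1.2) (Sum.inr pr)
  fb4_flip : ∀ (t : T) (b : Bool) (h₁ : IsetW F t b m ∈ scriptL F m)
    (h₂ : IsetW F t (!b) m ∈ scriptL F m) (hne : IsetW F t b m ≠ IsetW F t (!b) m)
    (pr qr : AddedV F m), pr.1.1 = IsetW F t b m → qr.1.1 = IsetW F t (!b) m →
    qr.1.2 = (fun i => (ηfam t).hom.toFun (pr.1.2 i)) →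
    flow (IsetW F t b m) (IsetW F t (!b) m) h₁ h₂ hne (Sum.inr pr) (Sum.inl pr.1.2) =
      flow (IsetW F t b m) (IsetW F t (!b) m) h₁ h₂ hne (Sum.inl qr.1.2) (Sum.inr qr)
  fb4_sym : ∀ (t : T) (b : Bool) (h₁ : IsetW F t b m ∈ scriptL F m)
    (h₂ : IsetW F t (!b) m ∈ scriptL F m) (hne : IsetW F t b m ≠ IsetW F t (!b) m)
    (hne' : IsetW F t (!b) m ≠ IsetW F t b m) (pr : AddedV F m),
    pr.1.1 = IsetW F t b m →
    flow (IsetW F t b m) (IsetW F t (!b) m) h₁ h₂ hne (Sum.inr pr) (Sum.inl pr.1.2) =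
      flow (IsetW F t (!b) m) (IsetW F t b m) h₂ h₁ hne' (Sum.inl pr.1.2) (Sum.inr pr)

/-- The `q`-energy of a flow basis: the maximal energy of its members. -/
noncomputable def basisEnergy [Nonempty T] {F : System S T} {ηfam : T → Iso F F} {m : ℕ}
    (q : ℝ) (FB : FlowBasis F ηfam m) : ℝ :=
  sSup {e | ∃ (L₁ L₂ : Set (Word S m)) (h₁ : L₁ ∈ scriptL F m) (h₂ : L₂ ∈ scriptL F m)
    (hne : L₁ ≠ L₂), e = energy q (FB.flow L₁ L₂ h₁ h₂ hne)}

open Classical in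
/-- The twisted flow `T_α(F)` of Proposition "Twist flow". -/
noncomputable def Talpha [Nonempty T] {F : System S T} {m : ℕ} (R : ReflData F)
    (L₁ L₂' : Set (Word S m)) (A : TildeV F m ≃ TildeV F m)
    (Φ : TildeV F m → TildeV F m → ℝ) : TildeV F m → TildeV F m → ℝ := fun x y =>
  if (∃ w, x = Sum.inl w ∧ wordMap R w = w) ∧ (∃ w, y = Sum.inl w ∧ wordMap R w = w) then
    Φ x y
  else if ((∃ w, x = Sum.inl w ∧ w ∈ liftC R m) ∨
        (∃ pr : AddedV F m, x = Sum.inr pr ∧ (pr.1.1 = L₁ ∨ pr.1.1 = L₂'))) ∨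
      ((∃ w, y = Sum.inl w ∧ w ∈ liftC R m) ∨
        (∃ pr : AddedV F m, y = Sum.inr pr ∧ (pr.1.1 = L₁ ∨ pr.1.1 = L₂'))) then
    Φ x y + Φ (A.symm x) (A.symm y)
  else 0

end IGSP
namespace IGSP

/-- The symbol set of the ambient cubical system: `{1,…,L}^d × {1,…,s}` (0-indexed). -/
abbrev CSym (d L s : ℕ) := (Fin d → Fin L) × Fin s

/-- The ambient edge relation of type `t_j`. -/
def ambE {d L s : ℕ} (j : Fin d) (w v : CSym d L s) : Prop :=
  (∀ i, i ≠ j → w.1 i = v.1 i) ∧ (v.1 j : ℕ) = (w.1 j : ℕ) + 1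

/-- The ambient gluing rule of type `t_j`. -/
def ambI {d L s : ℕ} (j : Fin d) (w v : CSym d L s) : Prop :=
  (∀ i, i ≠ j → w.1 i = v.1 i) ∧ (w.1 j : ℕ) = L - 1 ∧ (v.1 j : ℕ) = 0 ∧ w.2 = v.2

/-- A symbol lying on the `j`-axis edge of the cube: all other coordinates extremal
and label `1`. -/
def onAxis {d L s : ℕ} (j : Fin d) (w : CSym d L s) : Prop :=
  (∀ i, i ≠ j → ((w.1 i : ℕ) = 0 ∨ (w.1 i : ℕ) = L - 1)) ∧ (w.2 : ℕ) = 0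

/-- The coordinate reflection `η_j : c_j ↦ L + 1 - c_j`. -/
def etaMap {d L s : ℕ} (j : Fin d) (w : CSym d L s) : CSym d L s :=
  ⟨fun i => if i = j then ⟨L - 1 - (w.1 j : ℕ), by have := (w.1 j).isLt; omega⟩ else w.1 i,
    w.2⟩

/-- The diagonal reflection `α_{j,k}^+` exchanging coordinates `j` and `k`. -/
def swapMap {d L s : ℕ} (j k : Fin d) (w : CSym d L s) : CSym d L s :=
  ⟨fun i => if i = j then w.1 k else if i = k then w.1 j else w.1 i, w.2⟩

/-- The anti-diagonal reflection `α_{j,k}^-`. -/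
def aswapMap {d L s : ℕ} (j k : Fin d) (w : CSym d L s) : CSym d L s :=
  ⟨fun i =>
    if i = j then ⟨L - 1 - (w.1 k : ℕ), by have := (w.1 k).isLt; omega⟩
    else if i = k then ⟨L - 1 - (w.1 j : ℕ), by have := (w.1 j).isLt; omega⟩
    else w.1 i, w.2⟩

/-- A cubical iterated graph system: a sub-system of the ambient system `𝔉(d,L,s)`
satisfying the conditions (C1)–(C4). -/
structure CubicalIGS (d L s : ℕ) where
  hd : 1 ≤ d
  hL : 3 ≤ L
  hs : 1 ≤ s
  Symb : Set (CSym d L s)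
  sys : System (↥Symb) (Fin d)
  edge_amb : ∀ x y : ↥Symb, sys.E x y → ambE (sys.typ x y) x.1 y.1
  glue_amb : ∀ (j : Fin d) (x y : ↥Symb), sys.glue j x y → ambI j x.1 y.1
  C1 : ∀ w : CSym d L s, (∃ j, onAxis j w) → w ∈ Symb
  C2 : ∀ (j : Fin d) (x y : ↥Symb), onAxis j x.1 → onAxis j y.1 → ambE j x.1 y.1 →
    sys.E x y
  C3 : ∀ (j : Fin d) (x y : ↥Symb), onAxis j x.1 → onAxis j y.1 → ambI j x.1 y.1 →
    sys.glue j x y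
  C4_eta : ∀ j : Fin d, ∃ ψ : Iso sys sys,
    ∀ x : ↥Symb, (ψ.hom.toFun x : CSym d L s) = etaMap j x.1
  C4_plus : ∀ j k : Fin d, j ≠ k → ∃ ψ : Iso sys sys,
    ∀ x : ↥Symb, (ψ.hom.toFun x : CSym d L s) = swapMap j k x.1
  C4_minus : ∀ j k : Fin d, j ≠ k → ∃ ψ : Iso sys sys,
    ∀ x : ↥Symb, (ψ.hom.toFun x : CSym d L s) = aswapMap j k x.1

/-- The corner symbol `𝐤`: first coordinate `k`, all other coordinates `1`, label `1`. -/
def cornerSym {d L s : ℕ} (cub : CubicalIGS d L s) (k : Fin L) : ↥cub.Symb :=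
  ⟨⟨fun i => if (i : ℕ) = 0 then k else ⟨0, by have := k.isLt; omega⟩,
      ⟨0, by have := cub.hs; omega⟩⟩, by
    apply cub.C1
    refine ⟨⟨0, cub.hd⟩, fun i hi => ?_, rfl⟩
    have hiv : (i : ℕ) ≠ 0 := fun h => hi (Fin.ext h)
    left
    simp [hiv]⟩

end IGSP
namespace IGSP

/-- The edge relation of the Sierpiński gasket IGS. -/
abbrev gasketE (x y : Fin 3) : Prop :=
  (x = 0 ∧ y = 1) ∨ (x = 1 ∧ y = 2) ∨ (x = 0 ∧ y = 2)

/-- The Sierpiński gasket iterated graph system. -/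
noncomputable def gasket : System (Fin 3) (Fin 3) where
  E := gasketE
  not_both := by decide
  irrefl := by decide
  conn := by
    have hadj : ∀ a b : Fin 3, a ≠ b → gasketE a b ∨ gasketE b a := by decide
    intro x y
    rcases eq_or_ne x y with rfl | h
    · exact Relation.ReflTransGen.refl
    · exact Relation.ReflTransGen.single (hadj x y h)
  typ := fun x y => if x = 0 ∧ y = 1 then 0 else if x = 1 ∧ y = 2 then 1 else 2
  typ_surj := by decide
  glue := fun t x y =>
    (t = 0 ∧ x = 1 ∧ y = 0) ∨ (t = 1 ∧ x = 2 ∧ y = 1) ∨ (t = 2 ∧ x = 2 ∧ y = 0)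
  glue_nonempty := by decide

open Fin.NatCast in
/-- The pentagonal Sierpiński carpet iterated graph system. -/
noncomputable def pentagon : System (Fin 5) (Fin 5) where
  E := fun x y => y = x + 1
  not_both := by decide
  irrefl := by decide
  conn := by
    intro x y
    have key : ∀ (k : ℕ) (z : Fin 5),
        Relation.ReflTransGen (fun a b : Fin 5 => b = a + 1 ∨ a = b + 1) z (z + (k : Fin 5)) := by
      intro k
      induction k with
      | zero => intro z; simpa using Relation.ReflTransGen.refl
      | succ n ih =>
          intro z
          have h : ((n + 1 : ℕ) : Fin 5) = ((n : ℕ) : Fin 5) + 1 := by push_cast; ring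
          rw [h, ← add_assoc]
          exact (ih z).tail (Or.inl rfl)
    have h2 := key ((y - x : Fin 5) : ℕ) x
    rw [Fin.cast_val_eq_self] at h2
    have h3 : x + (y - x) = y := by abel
    rwa [h3] at h2
  typ := fun x _ => x
  typ_surj := fun t => ⟨t, t + 1, rfl, rfl⟩
  glue := fun t x y => (x = t + 1 ∧ y = t) ∨ (x = t + 2 ∧ y = t + 4)
  glue_nonempty := fun t => ⟨t + 1, t, Or.inl ⟨rfl, rfl⟩⟩

/-- The interval iterated graph system `𝔉(1, L)`. -/
noncomputable def intervalSys (L : ℕ) (hL : 3 ≤ L) : System (Fin L) Unit where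
  E x y := (y : ℕ) = (x : ℕ) + 1
  not_both := by intro x y h h'; omega
  irrefl := by intro x h; omega
  conn := by
    have key : ∀ (k : ℕ) (hk : k < L),
        Relation.ReflTransGen (fun a b : Fin L => ((b : ℕ) = (a : ℕ) + 1) ∨ ((a : ℕ) = (b : ℕ) + 1))
          ⟨0, by omega⟩ ⟨k, hk⟩ := by
      intro k
      induction k with
      | zero => intro hk; exact Relation.ReflTransGen.refl
      | succ n ih =>
          intro hk
          exact Relation.ReflTransGen.tail (ih (by omega)) (Or.inl rfl)
    intro x y
    have hsymm : Symmetric fun a b : Fin L => ((b : ℕ) = (a : ℕ) + 1) ∨ ((a : ℕ) = (b : ℕ) + 1) :=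
      fun a b h => h.symm
    have hx := key x.val x.isLt
    have hy := key y.val y.isLt
    simp only [Fin.eta] at hx hy
    exact Relation.ReflTransGen.trans (haveI : Std.Symm fun a b : Fin L => ((b : ℕ) = (a : ℕ) + 1) ∨ ((a : ℕ) = (b : ℕ) + 1) := ⟨fun a b h => hsymm h⟩; Std.Symm.symm _ _ hx) hy
  typ := fun _ _ => ()
  typ_surj := by
    intro t
    refine ⟨⟨0, by omega⟩, ⟨1, by omega⟩, rfl, ?_⟩
    cases t; rfl
  glue := fun _ x y => (x : ℕ) = L - 1 ∧ (y : ℕ) = 0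
  glue_nonempty := fun _ => ⟨⟨L - 1, by omega⟩, ⟨0, by omega⟩, rfl, rfl⟩

variable {S T : Type}

/-- A folding of `G_{k+n}` onto `w̃ · W_n`: a graph mapping into the induced subgraph on
`w̃ · W_n` which fixes `w̃ · W_n` pointwise. -/
def HasFolding [Nonempty T] (F : System S T) (k n : ℕ) (wt : Word S k) : Prop :=
  ∃ f : Word S (k + n) → Word S (k + n),
    (∀ x, ∃ u : Word S n, f x = Fin.append wt u) ∧
    (∀ u : Word S n, f (Fin.append wt u) = Fin.append wt u) ∧
    (∀ x y, adjW F (k + n) x y → f x = f y ∨ adjW F (k + n) (f x) (f y))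

end IGSP

/-!
The paths `θ_n` witnessing an intersection path have bounded, monotone lengths, so they
eventually have a constant length `ℓ`, and their `i`-th vertices converge to infinite words
`X₀, …, X_{ℓ-1}`; consecutive ones are joined, at every level, by an edge of `G₁` at some digit
`k` followed by gluing pairs at all later digits. In a cubical system such a step is a carry
in a single coordinate: that coordinate increases by one at digit `k` while all its later
digits pass from `L` to `1`, and the label may change only at digit `k`. A digit sequence has
at most one carry neighbour (it cannot end both in `L`'s and in `1`'s), so along the chain
every coordinate takes at most two values and every label change happens at the carry digit
of some coordinate. Hence an intersection path visits at most `2^d s^d` words, and two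
intersection paths from `w` yield `diam 𝒩(w) ≤ 2 · 2^d s^d`.
-/
theorem Monotone.exists_ge_forall_ge_eq_of_bddAbove {f : ℕ → ℕ} (hf : Monotone f)
    (hb : BddAbove (Set.range f)) (m : ℕ) : ∃ N ≥ m, ∀ n ≥ N, f n = f N := by
  obtain ⟨N₀, hN₀⟩ := Nat.sSup_mem (Set.range_nonempty f) hb
  refine ⟨max m N₀, le_max_left _ _, fun n hn => le_antisymm ?_ (hf hn)⟩
  calc f n ≤ sSup (Set.range f) := le_csSup hb ⟨n, rfl⟩
    _ = f N₀ := hN₀.symm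
    _ ≤ f (max m N₀) := hf (le_max_right _ _)

theorem SimpleGraph.Walk.dist_lt_ncard_of_support_subset {V : Type*} {G : SimpleGraph V}
    {u v : V} (p : G.Walk u v) {A : Set V} (hA : A.Finite) (hp : ∀ x ∈ p.support, x ∈ A) :
    G.dist u v < A.ncard := by
  classical
  calc G.dist u v ≤ p.bypass.length := G.dist_le _
    _ < p.bypass.support.length := by simp
    _ = p.bypass.support.toFinset.card :=
      (List.toFinset_card_of_nodup p.bypass_isPath.support_nodup).symm
    _ ≤ A.ncard := by
      rw [Set.ncard_eq_toFinset_card A hA]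
      exact Finset.card_le_card fun x hx => by
        simpa using hp x (p.support_bypass_subset_support (List.mem_toFinset.1 hx))

namespace IGSP

section Replacement

variable {S T : Type}

def truncate (x : ℕ → S) (n : ℕ) : Word S n := fun p => x p

variable {F : System S T}

variable (F) in
def EdgeAt (x y : ℕ → S) (k n : ℕ) : Prop :=
  (∀ p < k, x p = y p) ∧ F.E (x k) (y k) ∧
    ∀ p, k < p → p < n → F.glue (F.typ (x k) (y k)) (x p) (y p)

variable (F) in
def InfEdge (x y : ℕ → S) (k : ℕ) : Prop :=
  (∀ p < k, x p = y p) ∧ F.E (x k) (y k) ∧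
    ∀ p, k < p → F.glue (F.typ (x k) (y k)) (x p) (y p)

theorem EdgeAt.ne {x y : ℕ → S} {k n : ℕ} (h : EdgeAt F x y k n) : x k ≠ y k := fun he =>
  F.irrefl _ (he ▸ h.2.1)

/-- The digit at which an edge is created is the first digit where the two words differ. -/
theorem EdgeAt.digit_eq {x y : ℕ → S} {k k' n n' : ℕ}
    (h : EdgeAt F x y k n ∨ EdgeAt F y x k n) (h' : EdgeAt F x y k' n' ∨ EdgeAt F y x k' n') :
    k = k' := by
  have first_diff : ∀ {k n}, EdgeAt F x y k n ∨ EdgeAt F y x k n →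
      (∀ p < k, x p = y p) ∧ x k ≠ y k := by
    rintro k n (h | h)
    · exact ⟨h.1, h.ne⟩
    · exact ⟨fun p hp => (h.1 p hp).symm, h.ne.symm⟩
  obtain ⟨hpre, hne⟩ := first_diff h
  obtain ⟨hpre', hne'⟩ := first_diff h'
  rcases lt_trichotomy k k' with hlt | heq | hgt
  · exact absurd (hpre' k hlt) hne
  · exact heq
  · exact absurd (hpre k' hgt) hne'

theorem InfEdge.of_edgeAt {x y : ℕ → S} {k N : ℕ} (hN : EdgeAt F x y k N)
    (hlev : ∀ n ≥ N, EdgeAt F x y k n ∨ EdgeAt F y x k n) : InfEdge F x y k := by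
  refine ⟨hN.1, hN.2.1, fun p hp => ?_⟩
  rcases hlev (max N (p + 1)) (le_max_left _ _) with h | h
  · exact h.2.2 p hp (by omega)
  · exact (F.not_both _ _ hN.2.1 h.2.1).elim

variable [Nonempty T]

variable (F) in
theorem edge_succ_succ_iff (n : ℕ) (w v : Word S (n + 2)) :
    edge F (n + 2) w v ↔
      (Fin.init w = Fin.init v ∧ F.E (w (Fin.last (n + 1))) (v (Fin.last (n + 1)))) ∨
      (edge F (n + 1) (Fin.init w) (Fin.init v) ∧
        F.glue (etyp F (n + 1) (Fin.init w) (Fin.init v)) (w (Fin.last (n + 1)))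
          (v (Fin.last (n + 1)))) :=
  Iff.rfl

variable (F) in
theorem etyp_succ_succ_of_init_ne (n : ℕ) (w v : Word S (n + 2)) (h : Fin.init w ≠ Fin.init v) :
    etyp F (n + 2) w v = etyp F (n + 1) (Fin.init w) (Fin.init v) :=
  if_neg h

variable (F) in
theorem edge_irrefl : ∀ (n : ℕ) (w : Word S n), ¬ edge F n w w
  | 0, _, h => h
  | 1, _, h => F.irrefl _ h
  | n + 2, w, h => by
    rcases (edge_succ_succ_iff F n w w).1 h with ⟨-, h⟩ | ⟨h, -⟩
    · exact F.irrefl _ h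
    · exact edge_irrefl (n + 1) _ h

theorem adjW_ne {n : ℕ} {w v : Word S n} (h : adjW F n w v) : w ≠ v := by
  rintro rfl
  exact h.elim (edge_irrefl F n w) (edge_irrefl F n w)

theorem exists_edgeAt_of_edge {x y : ℕ → S} :
    ∀ {n : ℕ}, edge F n (truncate x n) (truncate y n) →
      ∃ k < n, EdgeAt F x y k n ∧ etyp F n (truncate x n) (truncate y n) = F.typ (x k) (y k)
  | 0, h => h.elim
  | 1, h => ⟨0, Nat.one_pos, ⟨by simp, h, by omega⟩, rfl⟩
  | n + 2, h => by
    rcases (edge_succ_succ_iff F n _ _).1 h with ⟨hinit, hE⟩ | ⟨hedge, hglue⟩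
    · exact ⟨n + 1, by omega, ⟨fun p hp => congrFun hinit ⟨p, hp⟩, hE, by omega⟩,
        if_pos hinit⟩
    · obtain ⟨k, hk, hedgeAt, htyp⟩ := exists_edgeAt_of_edge hedge
      have hinit : truncate x (n + 1) ≠ truncate y (n + 1) := fun he =>
        hedgeAt.ne (congrFun he ⟨k, hk⟩)
      refine ⟨k, by omega, ⟨hedgeAt.1, hedgeAt.2.1, fun p hkp hp => ?_⟩,
        (etyp_succ_succ_of_init_ne F n (truncate x _) (truncate y _) hinit).trans htyp⟩
      rcases Nat.lt_succ_iff_lt_or_eq.1 hp with hp | rfl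
      · exact hedgeAt.2.2 p hkp hp
      · rw [← htyp]
        exact hglue

theorem exists_edgeAt_of_adjW {x y : ℕ → S} {n : ℕ}
    (h : adjW F n (truncate x n) (truncate y n)) :
    ∃ k, EdgeAt F x y k n ∨ EdgeAt F y x k n := by
  rcases h with h | h
  · obtain ⟨k, -, hk, -⟩ := exists_edgeAt_of_edge h
    exact ⟨k, Or.inl hk⟩
  · obtain ⟨k, -, hk, -⟩ := exists_edgeAt_of_edge h
    exact ⟨k, Or.inr hk⟩

theorem exists_infEdge_of_adjW {x y : ℕ → S} {N : ℕ}
    (h : ∀ n ≥ N, adjW F n (truncate x n) (truncate y n)) :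
    ∃ k, InfEdge F x y k ∨ InfEdge F y x k := by
  obtain ⟨k, hk⟩ := exists_edgeAt_of_adjW (h N le_rfl)
  have hlev : ∀ n ≥ N, EdgeAt F x y k n ∨ EdgeAt F y x k n := fun n hn => by
    obtain ⟨k', hk'⟩ := exists_edgeAt_of_adjW (h n hn)
    rwa [EdgeAt.digit_eq hk hk']
  exact ⟨k, hk.imp (fun hN => .of_edgeAt hN hlev)
    (fun hN => .of_edgeAt hN fun n hn => (hlev n hn).symm)⟩

theorem IsPath.exists_walk {n : ℕ} {θ : List (Word S n)} {a b : Word S n} (hθ : IsPath F n θ)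
    (ha : θ.head? = some a) (hb : θ.getLast? = some b) :
    ∃ p : (replGraph F n).Walk a b, p.support = θ := by
  obtain ⟨hne, hchain⟩ := hθ
  have hadj : θ.IsChain (replGraph F n).Adj := hchain.imp fun _ _ h => ⟨adjW_ne h, h⟩
  exact ⟨(SimpleGraph.Walk.ofSupport θ hne hadj).copy
    ((List.head_eq_iff_head?_eq_some hne).2 ha) (List.getLast_of_mem_getLast? hb), by simp⟩

end Replacement

section IntersectionPath

variable {S T : Type}

theorem proj_sublist {k n : ℕ} (h : k ≤ n) (θ : List (Word S n)) :
    (proj h θ).Sublist (θ.map fun w i => w (Fin.castLE h i)) := by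
  classical
  exact List.destutter_sublist _ _

variable [Nonempty T] {F : System S T}

theorem IsIntersectionPath.exists_infEdge_lift {m : ℕ} {θ : List (Word S (m + 1))}
    (hθ : IsIntersectionPath F m θ) :
    ∃ (ℓ : ℕ) (X : ℕ → ℕ → S),
      (∀ i, i + 1 < ℓ →
        ∃ k, InfEdge F (X i) (X (i + 1)) k ∨ InfEdge F (X (i + 1)) (X i) k) ∧
      ∀ u ∈ θ, ∃ i < ℓ, u = truncate (X i) (m + 1) := by
  obtain ⟨-, Θ, rfl, hpath, hproj, C, hC⟩ := hθ
  have hsub : ∀ k n (h : k ≤ n),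
      (Θ k).Sublist ((Θ n).map fun w i => w (Fin.castLE (Nat.succ_le_succ h) i)) :=
    fun k n h => hproj k n h ▸ proj_sublist (Nat.succ_le_succ h) (Θ n)
  have hmono : Monotone fun n => (Θ n).length := fun k n h => by
    simpa using (hsub k n h).length_le
  obtain ⟨N, hmN, hN⟩ :=
    hmono.exists_ge_forall_ge_eq_of_bddAbove ⟨C, Set.forall_mem_range.2 hC⟩ m
  have hrestr : ∀ k n (h : k ≤ n), N ≤ k →
      Θ k = (Θ n).map fun w i => w (Fin.castLE (Nat.succ_le_succ h) i) :=
    fun k n h hk => (hsub k n h).eq_of_length (by simp [hN k hk, hN n (hk.trans h)])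
  obtain ⟨a, -⟩ := F.typ_surj (Classical.arbitrary T)
  let : Inhabited S := ⟨a⟩
  let X : ℕ → ℕ → S := fun i p => (Θ (max N p)).getD i default ⟨p, by omega⟩
  have hX : ∀ n ≥ N, ∀ i, truncate (X i) (n + 1) = (Θ n).getD i default := by
    intro n hn i
    funext q
    have hq := hrestr (max N q) n (max_le hn (Nat.le_of_lt_succ q.2)) (le_max_left _ _)
    simp only [truncate, X, hq, List.getD_eq_getElem?_getD, List.getElem?_map]
    cases (Θ n)[i]? <;> rfl
  refine ⟨(Θ N).length, X, fun i hi => exists_infEdge_of_adjW (N := N + 1) fun n hn => ?_,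
    fun u hu => ?_⟩
  · obtain ⟨n, rfl⟩ : ∃ n', n = n' + 1 := ⟨n - 1, by omega⟩
    have hlen : i + 1 < (Θ n).length := hN n (by omega) ▸ hi
    rw [hX n (by omega), hX n (by omega), List.getD_eq_getElem _ _ (by omega),
      List.getD_eq_getElem _ _ hlen]
    exact (hpath n).2.getElem i hlen
  · obtain ⟨w, hw, rfl⟩ := List.mem_map.1 ((hsub m N hmN).subset hu)
    obtain ⟨i, hi, rfl⟩ := List.getElem_of_mem hw
    refine ⟨i, hi, ?_⟩
    rw [← List.getD_eq_getElem _ default hi, ← hX N le_rfl]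
    rfl

end IntersectionPath

section Carry

variable {L : ℕ}

/-- Adding one at digit `k` to a base-`L` expansion whose later (less significant) digits are
all `L - 1`. -/
def IsCarry (a b : ℕ → Fin L) (k : ℕ) : Prop :=
  (∀ p < k, a p = b p) ∧ (b k : ℕ) = a k + 1 ∧
    ∀ p, k < p → (a p : ℕ) = L - 1 ∧ (b p : ℕ) = 0

def CarryAdj (a b : ℕ → Fin L) (k : ℕ) : Prop := IsCarry a b k ∨ IsCarry b a k

variable {a b c : ℕ → Fin L} {k k' : ℕ}

theorem IsCarry.eq_right (h : IsCarry a b k) (h' : IsCarry a c k') : k = k' ∧ b = c := by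
  have hkk' : k = k' := by
    rcases lt_trichotomy k k' with hlt | heq | hgt
    · have := (h.2.2 k' hlt).1; have := h'.2.1; have := (c k').isLt; omega
    · exact heq
    · have := (h'.2.2 k hgt).1; have := h.2.1; have := (b k).isLt; omega
  subst hkk'
  refine ⟨rfl, funext fun p => ?_⟩
  rcases lt_trichotomy p k with hlt | rfl | hgt
  · exact (h.1 p hlt).symm.trans (h'.1 p hlt)
  · exact Fin.ext (h.2.1.trans h'.2.1.symm)
  · exact Fin.ext ((h.2.2 p hgt).2.trans (h'.2.2 p hgt).2.symm)

theorem IsCarry.eq_left (h : IsCarry a b k) (h' : IsCarry c b k') : k = k' ∧ a = c := by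
  have hkk' : k = k' := by
    rcases lt_trichotomy k k' with hlt | heq | hgt
    · have := (h.2.2 k' hlt).2; have := h'.2.1; omega
    · exact heq
    · have := (h'.2.2 k hgt).2; have := h.2.1; omega
  subst hkk'
  refine ⟨rfl, funext fun p => ?_⟩
  rcases lt_trichotomy p k with hlt | rfl | hgt
  · exact (h.1 p hlt).trans (h'.1 p hlt).symm
  · exact Fin.ext (by have := h.2.1; have := h'.2.1; omega)
  · exact Fin.ext ((h.2.2 p hgt).1.trans (h'.2.2 p hgt).1.symm)

theorem IsCarry.not_isCarry (hL : 2 ≤ L) (h : IsCarry a b k) (h' : IsCarry b c k') : False := by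
  have := (h.2.2 (max k k' + 1) (by omega)).2
  have := (h'.2.2 (max k k' + 1) (by omega)).1
  omega

theorem CarryAdj.symm (h : CarryAdj a b k) : CarryAdj b a k := Or.symm h

theorem CarryAdj.eq (hL : 2 ≤ L) (h : CarryAdj a b k) (h' : CarryAdj a c k') :
    b = c ∧ k = k' := by
  rcases h with h | h <;> rcases h' with h' | h'
  · exact (h.eq_right h').symm
  · exact (h'.not_isCarry hL h).elim
  · exact (h.not_isCarry hL h').elim
  · exact (h.eq_left h').symm

theorem CarryAdj.step (hL : 2 ≤ L) {A : ℕ → Fin L} (ha : a = A ∨ ∃ k₀, CarryAdj A a k₀)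
    (hab : CarryAdj a b k) : (b = A ∨ ∃ k₀, CarryAdj A b k₀) ∧ ∃ c, CarryAdj A c k := by
  rcases ha with rfl | ⟨k₀, hk₀⟩
  · exact ⟨Or.inr ⟨k, hab⟩, b, hab⟩
  · obtain ⟨rfl, rfl⟩ := hk₀.symm.eq hL hab
    exact ⟨Or.inl rfl, a, hk₀⟩

end Carry

section Cube

variable {d L s : ℕ} {Y : Set (CSym d L s)}

def digitSeq (x : ℕ → Y) (j : Fin d) : ℕ → Fin L := fun p => (x p).1.1 j

def labelSeq (x : ℕ → Y) : ℕ → Fin s := fun p => (x p).1.2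

def CubeAdj (x y : ℕ → Y) (k : ℕ) : Prop :=
  ∃ j, CarryAdj (digitSeq x j) (digitSeq y j) k ∧ (∀ i ≠ j, digitSeq x i = digitSeq y i) ∧
    ∀ p ≠ k, labelSeq x p = labelSeq y p

theorem CubeAdj.symm {x y : ℕ → Y} {k : ℕ} (h : CubeAdj x y k) : CubeAdj y x k :=
  let ⟨j, hj, hdig, hlab⟩ := h
  ⟨j, hj.symm, fun i hi => (hdig i hi).symm, fun p hp => (hlab p hp).symm⟩

def carryOrbit (x₀ : ℕ → Y) : Set (ℕ → Y) :=
  {x | (∀ j, digitSeq x j = digitSeq x₀ j ∨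
      ∃ k, CarryAdj (digitSeq x₀ j) (digitSeq x j) k) ∧
    ∀ p, labelSeq x p ≠ labelSeq x₀ p → ∃ j c, CarryAdj (digitSeq x₀ j) c p}

theorem self_mem_carryOrbit (x₀ : ℕ → Y) : x₀ ∈ carryOrbit x₀ :=
  ⟨fun _ => Or.inl rfl, fun _ h => (h rfl).elim⟩

theorem carryOrbit_step (hL : 2 ≤ L) {x₀ x y : ℕ → Y} {k : ℕ} (hx : x ∈ carryOrbit x₀)
    (hxy : CubeAdj x y k) : y ∈ carryOrbit x₀ := by
  obtain ⟨j, hj, hother, hlabel⟩ := hxy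
  obtain ⟨hyj, c, hc⟩ := CarryAdj.step hL (hx.1 j) hj
  refine ⟨fun i => ?_, fun p hp => ?_⟩
  · by_cases hi : i = j
    · exact hi ▸ hyj
    · exact hother i hi ▸ hx.1 i
  · by_cases hpk : p = k
    · exact ⟨j, c, hpk ▸ hc⟩
    · exact hx.2 p (hlabel p hpk ▸ hp)

/-- A word of the orbit is determined by which coordinates moved and by its labels at the
carry digits of the coordinates of `x₀`. -/
theorem carryOrbit_finite_ncard_le (hL : 2 ≤ L) (x₀ : ℕ → Y) :
    (carryOrbit x₀).Finite ∧ (carryOrbit x₀).ncard ≤ 2 ^ d * s ^ d := by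
  classical
  let q : Fin d → ℕ := fun j => Classical.epsilon fun p => ∃ c, CarryAdj (digitSeq x₀ j) c p
  have hq : ∀ j c p, CarryAdj (digitSeq x₀ j) c p → q j = p := by
    intro j c p h
    obtain ⟨_, hc'⟩ : ∃ c', CarryAdj (digitSeq x₀ j) c' (q j) :=
      Classical.epsilon_spec (p := fun p => ∃ c, CarryAdj (digitSeq x₀ j) c p) ⟨p, c, h⟩
    exact (hc'.eq hL h).2
  let φ : (ℕ → Y) → (Fin d → Bool) × (Fin d → Fin s) := fun x =>
    (fun j => decide (digitSeq x j = digitSeq x₀ j), fun j => labelSeq x (q j))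
  have hinj : Set.InjOn φ (carryOrbit x₀) := by
    intro x hx y hy hxy
    obtain ⟨hdig, hlab⟩ := Prod.ext_iff.1 hxy
    have hd : ∀ j, digitSeq x j = digitSeq y j := by
      intro j
      have hiff := decide_eq_decide.1 (congrFun hdig j)
      by_cases hxj : digitSeq x j = digitSeq x₀ j
      · exact hxj.trans (hiff.1 hxj).symm
      · obtain ⟨k, hk⟩ := (hx.1 j).resolve_left hxj
        obtain ⟨k', hk'⟩ := (hy.1 j).resolve_left (mt hiff.2 hxj)
        exact (hk.eq hL hk').1
    have hl : ∀ p, labelSeq x p = labelSeq y p := by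
      intro p
      by_cases h : labelSeq x p = labelSeq x₀ p ∧ labelSeq y p = labelSeq x₀ p
      · exact h.1.trans h.2.symm
      · obtain ⟨j, c, hc⟩ : ∃ j c, CarryAdj (digitSeq x₀ j) c p := by
          rcases not_and_or.1 h with h | h
          exacts [hx.2 p h, hy.2 p h]
        exact hq j c p hc ▸ congrFun hlab j
    exact funext fun p => Subtype.ext (Prod.ext (funext fun j => congrFun (hd j) p) (hl p))
  refine ⟨Set.Finite.of_finite_image (Set.toFinite _) hinj, ?_⟩
  rw [← hinj.ncard_image]
  simpa using Set.ncard_le_card (φ '' carryOrbit x₀)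

end Cube

variable {d L s : ℕ}

theorem CubicalIGS.cubeAdj_of_infEdge (cub : CubicalIGS d L s) {x y : ℕ → cub.Symb} {k : ℕ}
    (h : InfEdge cub.sys x y k) : CubeAdj x y k := by
  obtain ⟨hpre, hE, hglue⟩ := h
  have hE := cub.edge_amb _ _ hE
  have hglue p hp := cub.glue_amb _ _ _ (hglue p hp)
  refine ⟨cub.sys.typ (x k) (y k),
    Or.inl ⟨fun p hp => congrArg (fun z : cub.Symb => z.1.1 _) (hpre p hp), hE.2,
      fun p hp => ⟨(hglue p hp).2.1, (hglue p hp).2.2.1⟩⟩,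
    fun i hi => funext fun p => ?_, fun p hp => ?_⟩
  · rcases lt_trichotomy p k with hlt | rfl | hgt
    · exact congrArg (fun z : cub.Symb => z.1.1 i) (hpre p hlt)
    · exact hE.1 i hi
    · exact (hglue p hgt).1 i hi
  · rcases lt_trichotomy p k with hlt | rfl | hgt
    · exact congrArg (fun z : cub.Symb => z.1.2) (hpre p hlt)
    · exact (hp rfl).elim
    · exact (hglue p hgt).2.2.2

theorem CubicalIGS.exists_finite_cover (cub : CubicalIGS d L s) [Nonempty (Fin d)] {m : ℕ}
    {θ : List (Word cub.Symb (m + 1))} (hθ : IsIntersectionPath cub.sys m θ) :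
    ∃ A : Set (Word cub.Symb (m + 1)),
      A.Finite ∧ A.ncard ≤ 2 ^ d * s ^ d ∧ ∀ u ∈ θ, u ∈ A := by
  obtain ⟨ℓ, X, hstep, hθX⟩ := hθ.exists_infEdge_lift
  have hL : 2 ≤ L := by have := cub.hL; omega
  have horbit : ∀ i < ℓ, X i ∈ carryOrbit (X 0) := by
    intro i
    induction i with
    | zero => exact fun _ => self_mem_carryOrbit _
    | succ i ih =>
      intro hi
      obtain ⟨k, hk | hk⟩ := hstep i hi
      · exact carryOrbit_step hL (ih (by omega)) (cub.cubeAdj_of_infEdge hk)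
      · exact carryOrbit_step hL (ih (by omega)) (cub.cubeAdj_of_infEdge hk).symm
  obtain ⟨hfin, hcard⟩ := carryOrbit_finite_ncard_le hL (X 0)
  refine ⟨(truncate · (m + 1)) '' carryOrbit (X 0), hfin.image _,
    (Set.ncard_image_le hfin).trans hcard, fun u hu => ?_⟩
  obtain ⟨i, hi, rfl⟩ := hθX u hu
  exact Set.mem_image_of_mem _ (horbit i hi)

/-- Every cubical iterated graph system is of bounded geometry. -/
theorem statement10 (d L s : ℕ) (cub : CubicalIGS d L s) :
    letI : Nonempty (Fin d) := ⟨⟨0, cub.hd⟩⟩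
    BoundedGeometry cub.sys := by
  have : Nonempty (Fin d) := ⟨⟨0, cub.hd⟩⟩
  refine ⟨2 * (2 ^ d * s ^ d),
    fun m w v₁ ⟨θ₁, hθ₁, hw₁, hv₁⟩ v₂ ⟨θ₂, hθ₂, hw₂, hv₂⟩ => ?_⟩
  obtain ⟨A₁, hA₁, hcard₁, hθA₁⟩ := cub.exists_finite_cover hθ₁
  obtain ⟨A₂, hA₂, hcard₂, hθA₂⟩ := cub.exists_finite_cover hθ₂
  obtain ⟨p₁, rfl⟩ := hθ₁.1.exists_walk hw₁ hv₁
  obtain ⟨p₂, rfl⟩ := hθ₂.1.exists_walk hw₂ hv₂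
  have hsupport : ∀ x ∈ (p₁.reverse.append p₂).support, x ∈ A₁ ∪ A₂ := by
    intro x hx
    rcases (by simpa using hx : x ∈ p₁.support ∨ x ∈ p₂.support) with hx | hx
    exacts [Or.inl (hθA₁ x hx), Or.inr (hθA₂ x hx)]
  have hdist := (p₁.reverse.append p₂).dist_lt_ncard_of_support_subset (hA₁.union hA₂) hsupport
  have := Set.ncard_union_le A₁ A₂
  omega

end IGSP
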